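/- Let {G_n} be an inverse system of countable abelian groups indexed by ℕ. Then lim¹ {G_n} is either trivial or uncountable. -/

import Mathlib

/-!
Write `transition f m n : G m →+ G n` for the composite of the `f`'s. If the images
`(transition f m n).range` stabilise in `m` (Mittag-Leffler), `Δ` is onto: subtracting the
boundary of finite sums `∑ j ∈ [n, M n), transition f j n (y j)` moves any `y` into the product of
the stable images, on which the `f n` are onto, and there `Δ` is inverted recursively.
Otherwise the images `R k` of `G (m k)` in some `G n` decrease strictly along a sequence `m`.
Reducing the partial sums `∑ j ∈ [n, m k), transition f j n (y j)` modulo `R k` sends boundaries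
into the image of the countable group `G n`, yet, with `g k ∈ R k \ R (k + 1)`, the sums of the
`g k` over the subsets of `ℕ` give continuum many distinct values; so `lim¹` cannot be countable.
-/

/-- The map `Δ : ∏ₙ Gₙ → ∏ₙ Gₙ`, `Δ((xₙ)) = (xₙ - fₙ(xₙ₊₁))`, whose cokernel is
the derived functor `lim¹` of the inverse system `(Gₙ, fₙ)`. -/
def lim1Delta (G : ℕ → Type*) [∀ n, AddCommGroup (G n)]
    (f : ∀ n, G (n + 1) →+ G n) : (∀ n, G n) →+ (∀ n, G n) :=
  AddMonoidHom.mk' (fun x n => x n - f n (x (n + 1))) (by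
    intro x y
    funext n
    simp only [Pi.add_apply, map_add]
    abel)

/-- `lim¹` of an inverse system of abelian groups indexed by `ℕ`:
the cokernel of `Δ`. -/
abbrev lim1 (G : ℕ → Type*) [∀ n, AddCommGroup (G n)]
    (f : ∀ n, G (n + 1) →+ G n) : Type _ :=
  (∀ n, G n) ⧸ (lim1Delta G f).range

open Finset

theorem not_countable_set_nat : ¬ Countable (Set ℕ) := fun _ =>
  let ⟨e, he⟩ := exists_surjective_nat (Set ℕ)
  Function.cantor_surjective e he

theorem injective_mk_sum_indicator {A : Type*} [AddCommGroup A] (R : ℕ → AddSubgroup A)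
    {g : ℕ → A} (hg : ∀ k, g k ∉ R (k + 1)) :
    Function.Injective fun (s : Set ℕ) (k : ℕ) =>
      (QuotientAddGroup.mk (∑ i ∈ range k, s.indicator g i) : A ⧸ R k) := by
  intro s t hst
  ext k
  induction k using Nat.strong_induction_on with
  | _ k ih =>
  have hbelow : ∑ i ∈ range k, s.indicator g i = ∑ i ∈ range k, t.indicator g i :=
    sum_congr rfl fun i hi => by
      by_cases hs : i ∈ s <;> simp [hs, ← ih i (mem_range.mp hi)]
  have hk : -s.indicator g k + t.indicator g k ∈ R (k + 1) := by
    simpa [sum_range_succ, hbelow] using QuotientAddGroup.eq.mp (congrFun hst (k + 1))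
  by_cases hs : k ∈ s <;> by_cases ht : k ∈ t
  · exact iff_of_true hs ht
  · exact absurd (by simpa [hs, ht] using hk) (hg k)
  · exact absurd (by simpa [hs, ht] using hk) (hg k)
  · exact iff_of_false hs ht

theorem countable_range_of_map_le_range {M N A : Type*} [AddGroup M] [AddGroup N] [AddGroup A]
    [Countable A] {H : AddSubgroup M} [Countable (M ⧸ H)] (φ : M →+ N) (ψ : A →+ N)
    (h : H.map φ ≤ ψ.range) : (Set.range φ).Countable := by
  refine (Set.countable_range fun p : (M ⧸ H) × A => φ p.1.out + ψ p.2).mono ?_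
  rintro _ ⟨x, rfl⟩
  have hx : -(x : M ⧸ H).out + x ∈ H := QuotientAddGroup.eq.mp (QuotientAddGroup.out_eq' _)
  obtain ⟨a, ha⟩ := h ⟨_, hx, rfl⟩
  exact ⟨((x : M ⧸ H), a), by simp only [ha, map_add, map_neg, add_neg_cancel_left]⟩

theorem exists_pi_extend_by_zero {ι κ : Type*} {β : ι → Type*} [∀ i, Zero (β i)] {m : κ → ι}
    (hm : Function.Injective m) (z : ∀ k, β (m k)) :
    ∃ y : ∀ i, β i, (∀ k, y (m k) = z k) ∧ ∀ i ∉ Set.range m, y i = 0 := by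
  have : ∀ i, ∃ v : β i, (∀ k, m k = i → HEq v (z k)) ∧ (i ∉ Set.range m → v = 0) := by
    intro i
    by_cases hi : i ∈ Set.range m
    · obtain ⟨k, rfl⟩ := hi
      refine ⟨z k, fun k' hk' => ?_, fun h => (h ⟨k, rfl⟩).elim⟩
      obtain rfl := hm hk'
      rfl
    · exact ⟨0, fun k hk => (hi ⟨k, hk⟩).elim, fun _ => rfl⟩
  choose y hy hy0 using this
  exact ⟨y, fun k => eq_of_heq (hy _ k rfl), hy0⟩

theorem exists_strictMono_lt_of_forall_exists_ne {α : Type*} [PartialOrder α] {p : ℕ → α}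
    {n₀ : ℕ} (hp : ∀ s m, n₀ ≤ s → s ≤ m → p m ≤ p s) (h : ∀ s, ∃ m, s ≤ m ∧ p m ≠ p s) :
    ∃ m : ℕ → ℕ, StrictMono m ∧ m 0 = n₀ ∧ ∀ k, p (m (k + 1)) < p (m k) := by
  choose next hle hne using h
  have hge : ∀ k, n₀ ≤ next^[k] n₀ := fun k => by
    induction k with
    | zero => exact le_rfl
    | succ k ih => exact ih.trans (Function.iterate_succ_apply' next k n₀ ▸ hle _)
  refine ⟨fun k => next^[k] n₀, strictMono_nat_of_lt_succ fun k => ?_, rfl, fun k => ?_⟩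
  · show next^[k] n₀ < next^[k + 1] n₀
    rw [Function.iterate_succ_apply']
    exact (hle _).lt_of_ne fun heq => hne _ (congrArg p heq.symm)
  · show p (next^[k + 1] n₀) < _
    rw [Function.iterate_succ_apply']
    exact (hp _ _ (hge k) (hle _)).lt_of_ne (hne _)

section InverseSystem

variable {G : ℕ → Type*} [∀ n, AddCommGroup (G n)] (f : ∀ n, G (n + 1) →+ G n)

theorem lim1Delta_apply (x : ∀ n, G n) (n : ℕ) : lim1Delta G f x n = x n - f n (x (n + 1)) :=
  rfl

/-- The composite `f n ∘ ⋯ ∘ f (m - 1) : G m →+ G n`; it is `0` when `m < n`. -/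
def transition : ∀ m n, G m →+ G n
  | 0, 0 => AddMonoidHom.id _
  | 0, _ + 1 => 0
  | m + 1, n => if h : n = m + 1 then h ▸ AddMonoidHom.id _ else (transition m n).comp (f m)

@[simp]
theorem transition_self (m : ℕ) : transition f m m = AddMonoidHom.id _ := by
  cases m <;> simp [transition]

theorem transition_succ_left {m n : ℕ} (h : n ≤ m) :
    transition f (m + 1) n = (transition f m n).comp (f m) := by
  rw [transition, dif_neg (by omega)]

theorem transition_comp {n k m : ℕ} (hnk : n ≤ k) (hkm : k ≤ m) :
    (transition f k n).comp (transition f m k) = transition f m n := by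
  induction m, hkm using Nat.le_induction with
  | base => simp
  | succ m hkm ih =>
    rw [transition_succ_left f hkm, transition_succ_left f (hnk.trans hkm), ← ih,
      AddMonoidHom.comp_assoc]

theorem transition_succ_right {m n : ℕ} (h : n < m) :
    transition f m n = (f n).comp (transition f m (n + 1)) := by
  rw [← transition_comp f n.le_succ h, transition_succ_left f le_rfl, transition_self]
  rfl

theorem range_transition_antitone {n m m' : ℕ} (h : n ≤ m) (h' : m ≤ m') :
    (transition f m' n).range ≤ (transition f m n).range := by
  rw [← transition_comp f h h', AddMonoidHom.range_comp]
  exact AddSubgroup.map_le_range _ _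

def transitionSum (n N : ℕ) : (∀ j, G j) →+ G n :=
  ∑ j ∈ Ico n N, (transition f j n).comp (Pi.evalAddMonoidHom G j)

theorem transitionSum_apply (n N : ℕ) (y : ∀ j, G j) :
    transitionSum f n N y = ∑ j ∈ Ico n N, transition f j n (y j) := by
  simp [transitionSum, AddMonoidHom.finsetSum_apply]

theorem transitionSum_sub_mem_range {n N N' : ℕ} (h : n ≤ N) (h' : N ≤ N') (y : ∀ j, G j) :
    transitionSum f n N' y - transitionSum f n N y ∈ (transition f N n).range := by
  rw [transitionSum_apply, transitionSum_apply, ← sum_Ico_consecutive _ h h', add_sub_cancel_left]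
  exact AddSubgroup.sum_mem _ fun j hj => range_transition_antitone f h (mem_Ico.mp hj).1 ⟨y j, rfl⟩

theorem map_transitionSum_succ {n N : ℕ} (h : n < N) (y : ∀ j, G j) :
    f n (transitionSum f (n + 1) N y) = transitionSum f n N y - y n := by
  rw [transitionSum_apply, transitionSum_apply, map_sum, sum_eq_sum_Ico_succ_bot h, transition_self,
    AddMonoidHom.id_apply, add_sub_cancel_left]
  refine sum_congr rfl fun j hj => ?_
  rw [transition_succ_right f (mem_Ico.mp hj).1]
  rfl

theorem transitionSum_lim1Delta {n N : ℕ} (h : n ≤ N) (x : ∀ j, G j) :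
    transitionSum f n N (lim1Delta G f x) = x n - transition f N n (x N) := by
  have hterm : ∀ j ∈ Ico n N, transition f j n (lim1Delta G f x j) =
      -(transition f (j + 1) n (x (j + 1)) - transition f j n (x j)) := fun j hj => by
    rw [lim1Delta_apply, map_sub, transition_succ_left f (mem_Ico.mp hj).1, neg_sub]
    rfl
  rw [transitionSum_apply, sum_congr rfl hterm, sum_neg_distrib,
    sum_Ico_sub (fun j => transition f j n (x j)) h, transition_self, neg_sub]
  rfl

def IsMittagLeffler : Prop :=
  ∀ n, ∃ s, ∀ m, s ≤ m → (transition f m n).range = (transition f s n).range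

theorem lim1Delta_mem_range_of_forall_mem (A : ∀ n, AddSubgroup (G n))
    (hA : ∀ n, ∀ a ∈ A n, ∃ b ∈ A (n + 1), f n b = a) {w : ∀ n, G n} (hw : ∀ n, w n ∈ A n) :
    w ∈ (lim1Delta G f).range := by
  choose b hbA hfb using hA
  let X : ∀ n, A n := fun n => Nat.rec ⟨0, zero_mem _⟩
    (fun n p => ⟨b n (p - w n) (sub_mem p.2 (hw n)), hbA _ _ _⟩) n
  refine ⟨fun n => (X n).1, funext fun n => ?_⟩
  rw [lim1Delta_apply]
  show (X n).1 - f n (b n ((X n).1 - w n) _) = w n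
  rw [hfb, sub_sub_cancel]

theorem IsMittagLeffler.exists_stable (hML : IsMittagLeffler f) :
    ∃ M : ℕ → ℕ, Monotone M ∧ (∀ n, n < M n) ∧
      ∀ n m, M n ≤ m → (transition f m n).range = (transition f (M n) n).range := by
  choose s hs using hML
  have hsM : ∀ n, s n ≤ n + 1 + ∑ i ∈ range (n + 1), s i := fun n =>
    le_add_left (single_le_sum (fun _ _ => Nat.zero_le _) (self_mem_range_succ n))
  refine ⟨fun n => n + 1 + ∑ i ∈ range (n + 1), s i,
    fun a b hab => add_le_add (by omega) (sum_le_sum_of_subset (range_subset_range.mpr (by omega))),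
    fun n => by dsimp only; omega, fun n m hm => by rw [hs n m ((hsM n).trans hm), hs n _ (hsM n)]⟩

theorem IsMittagLeffler.lim1Delta_surjective (hML : IsMittagLeffler f) :
    Function.Surjective (lim1Delta G f) := by
  obtain ⟨M, hMmono, hlt, hstable⟩ := hML.exists_stable
  let A n := (transition f (M n) n).range
  have hA : ∀ n, ∀ a ∈ A n, ∃ b ∈ A (n + 1), f n b = a := by
    intro n a ha
    let t := max (M n) (M (n + 1))
    obtain ⟨c, rfl⟩ := (hstable n t (le_max_left ..)).ge ha
    refine ⟨transition f t (n + 1) c, (hstable (n + 1) t (le_max_right ..)).le ⟨c, rfl⟩, ?_⟩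
    rw [transition_succ_right f ((hlt n).trans_le (le_max_left ..))]
    rfl
  intro y
  let x n := transitionSum f n (M n) y
  have hw : ∀ n, (y - lim1Delta G f x) n ∈ A n := fun n => by
    have : (y - lim1Delta G f x) n =
        transitionSum f n (M (n + 1)) y - transitionSum f n (M n) y := by
      rw [Pi.sub_apply, lim1Delta_apply,
        map_transitionSum_succ f ((Nat.lt_succ_self n).trans (hlt (n + 1)))]
      abel
    rw [this]
    exact transitionSum_sub_mem_range f (hlt n).le (hMmono n.le_succ) y
  obtain ⟨X, hX⟩ := lim1Delta_mem_range_of_forall_mem f A hA hw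
  exact ⟨x + X, by rw [map_add, hX, add_sub_cancel]⟩

theorem exists_transitionSum_eq_sum {m : ℕ → ℕ} (hm : StrictMono m) {n : ℕ} (hm0 : m 0 = n)
    (z : ∀ k, G (m k)) :
    ∃ y : ∀ j, G j, ∀ K, transitionSum f n (m K) y = ∑ k ∈ range K, transition f (m k) n (z k) := by
  obtain ⟨y, hyz, hy0⟩ := exists_pi_extend_by_zero hm.injective z
  refine ⟨y, fun K => ?_⟩
  induction K with
  | zero => rw [hm0, transitionSum_apply, Ico_self, sum_empty, sum_range_zero]
  | succ K ih =>
    have hK : m K < m (K + 1) := hm K.lt_succ_self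
    rw [sum_range_succ, ← ih, ← sub_eq_iff_eq_add', transitionSum_apply, transitionSum_apply,
      ← sum_Ico_consecutive _ (hm0 ▸ hm.monotone K.zero_le) hK.le, add_sub_cancel_left,
      sum_eq_single_of_mem (m K) (left_mem_Ico.mpr hK), hyz]
    intro j hj hjK
    rw [hy0 j ?_, map_zero]
    rintro ⟨k, rfl⟩
    have := hm.lt_iff_lt.mp ((mem_Ico.mp hj).1.lt_of_ne' hjK)
    have := hm.lt_iff_lt.mp (mem_Ico.mp hj).2
    omega

def transitionSumMod (m : ℕ → ℕ) (n : ℕ) :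
    (∀ j, G j) →+ ∀ k, G n ⧸ (transition f (m k) n).range :=
  AddMonoidHom.pi fun k => (QuotientAddGroup.mk' _).comp (transitionSum f n (m k))

theorem map_range_lim1Delta_le {m : ℕ → ℕ} {n : ℕ} (hmn : ∀ k, n ≤ m k) :
    (lim1Delta G f).range.map (transitionSumMod f m n) ≤
      (AddMonoidHom.pi fun k => QuotientAddGroup.mk' (transition f (m k) n).range).range := by
  rintro _ ⟨_, ⟨x, rfl⟩, rfl⟩
  refine ⟨x n, funext fun k => ?_⟩
  have hzero : (transition f (m k) n (x (m k)) : G n ⧸ (transition f (m k) n).range) = 0 :=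
    (QuotientAddGroup.eq_zero_iff _).mpr ⟨_, rfl⟩
  simp [transitionSumMod, transitionSum_lim1Delta f (hmn k), hzero]

theorem not_countable_lim1_of_not_isMittagLeffler [∀ n, Countable (G n)]
    (hML : ¬ IsMittagLeffler f) : ¬ Countable (lim1 G f) := by
  intro hcount
  obtain ⟨n, hn⟩ : ∃ n, ∀ s, ∃ m, s ≤ m ∧ (transition f m n).range ≠ (transition f s n).range := by
    simpa [IsMittagLeffler] using hML
  obtain ⟨m, hm, hm0, hlt⟩ := exists_strictMono_lt_of_forall_exists_ne
    (fun s m' hs hsm => range_transition_antitone f hs hsm) hn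
  have hmn : ∀ k, n ≤ m k := fun k => hm0 ▸ hm.monotone k.zero_le
  let R k := (transition f (m k) n).range
  choose g hgR hg using fun k => SetLike.exists_of_lt (hlt k)
  choose u hu using hgR
  have hrealize : ∀ s : Set ℕ, ∃ y, transitionSumMod f m n y =
      fun k => ((∑ i ∈ range k, s.indicator g i : G n) : G n ⧸ R k) := by
    classical
    intro s
    obtain ⟨y, hy⟩ := exists_transitionSum_eq_sum f hm hm0 fun k => if k ∈ s then u k else 0
    refine ⟨y, funext fun K => ?_⟩
    simp only [transitionSumMod, AddMonoidHom.pi_apply, AddMonoidHom.comp_apply,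
      QuotientAddGroup.mk'_apply, hy]
    congr 1
    refine sum_congr rfl fun k _ => ?_
    by_cases hk : k ∈ s <;> simp [hk, hu]
  have hcountable : (Set.range fun (s : Set ℕ) (k : ℕ) =>
      ((∑ i ∈ range k, s.indicator g i : G n) : G n ⧸ R k)).Countable :=
    (countable_range_of_map_le_range _ _ (map_range_lim1Delta_le f hmn)).mono
      (Set.range_subset_iff.mpr hrealize)
  exact not_countable_set_nat (Set.countable_univ_iff.mp
    ((Set.mapsTo_range _ _).countable_of_injOn (injective_mk_sum_indicator R hg).injOn hcountable))

end InverseSystem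

/-- **Gray.**  lim¹ of an inverse system of countable abelian
groups indexed by ℕ is either trivial or uncountable. -/
theorem lim1_subsingleton_or_uncountable (G : ℕ → Type*) [∀ n, AddCommGroup (G n)]
    [∀ n, Countable (G n)] (f : ∀ n, G (n + 1) →+ G n) :
    Subsingleton (lim1 G f) ∨ ¬ Countable (lim1 G f) := by
  by_cases hML : IsMittagLeffler f
  · left
    rw [lim1, (lim1Delta G f).range_eq_top_of_surjective hML.lim1Delta_surjective]
    exact QuotientAddGroup.subsingleton_quotient_top
  · exact Or.inr (not_countable_lim1_of_not_isMittagLeffler f hML)
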